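/- arXiv:1806.11104 — 4 statements merged into one kernel-verified Lean document; each statement's English description precedes it below -/
import Mathlib

section
/- Let P be a nonzero polynomial with real coefficients whose leading coefficient is positive, and let u₀ ∈ ℝ be a root of P of multiplicity j. Let N be the sum of the multiplicities of all real roots of P that are strictly greater than u₀. Then the sign of P^{(j)}(u₀) equals (−1)^N; that is, P^{(j)}(u₀) > 0 if N is even and P^{(j)}(u₀) < 0 if N is odd. -/
/-!
Write `P = (X - u₀)^j * Q` with `Q(u₀) ≠ 0`; then `P^{(j)}(u₀) = j! * Q(u₀)`, and the roots of `Q`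
above `u₀` are those of `P`. A polynomial with positive leading coefficient is positive to the
right of its largest real root (intermediate value theorem), and each factor `X - r` with
`r > u₀` flips the sign at `u₀`, so `Q(u₀)` has sign `(-1)^N`.
-/

open Polynomial

namespace Polynomial

variable {Q : ℝ[X]} {x : ℝ}

theorem eval_pos_of_leadingCoeff_pos_of_forall_gt_not_isRoot (hlc : 0 < Q.leadingCoeff)
    (hx : Q.eval x ≠ 0) (hroots : ∀ y, x < y → ¬ Q.IsRoot y) : 0 < Q.eval x := by
  by_contra! hneg
  have hdeg : 0 < Q.degree := by
    by_contra! hdeg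
    have hQ := eq_C_of_degree_le_zero hdeg
    rw [hQ, leadingCoeff_C] at hlc
    rw [hQ, eval_C] at hneg
    linarith
  have htop := Q.tendsto_atTop_of_leadingCoeff_nonneg hdeg hlc.le
  obtain ⟨y, hQy, hxy⟩ := ((htop.eventually_gt_atTop 0).and (Filter.eventually_gt_atTop x)).exists
  obtain ⟨z, hz, hQz⟩ := intermediate_value_Ioo hxy.le Q.continuousOn
    ⟨hneg.lt_of_ne hx, hQy⟩
  exact hroots z hz.1 hQz

theorem roots_filter_gt_X_sub_C_mul {r : ℝ} (hxr : x < r) (hQ : Q ≠ 0) :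
    ((X - C r) * Q).roots.filter (x < ·) = r ::ₘ Q.roots.filter (x < ·) := by
  rw [roots_mul (mul_ne_zero (X_sub_C_ne_zero r) hQ), roots_X_sub_C, Multiset.filter_add,
    Multiset.filter_singleton, if_pos hxr, Multiset.singleton_add]

theorem roots_filter_gt_X_sub_C_pow_mul (m : ℕ) (hQ : Q ≠ 0) :
    ((X - C x) ^ m * Q).roots.filter (x < ·) = Q.roots.filter (x < ·) := by
  rw [roots_mul (mul_ne_zero (pow_ne_zero m (X_sub_C_ne_zero x)) hQ), roots_pow, roots_X_sub_C,
    Multiset.filter_add, Multiset.filter_nsmul, Multiset.filter_singleton, if_neg (lt_irrefl x),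
    Multiset.empty_eq_zero, nsmul_zero, zero_add]

theorem neg_one_pow_card_roots_gt_mul_eval_pos (hlc : 0 < Q.leadingCoeff) (hx : Q.eval x ≠ 0) :
    0 < (-1) ^ (Q.roots.filter (x < ·)).card * Q.eval x := by
  induction hn : (Q.roots.filter (x < ·)).card generalizing Q with
  | zero =>
    rw [pow_zero, one_mul]
    refine eval_pos_of_leadingCoeff_pos_of_forall_gt_not_isRoot hlc hx fun y hxy hy => ?_
    have hmem : y ∈ Q.roots.filter (x < ·) :=
      Multiset.mem_filter.mpr ⟨(mem_roots (leadingCoeff_ne_zero.mp hlc.ne')).mpr hy, hxy⟩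
    exact Multiset.notMem_zero y (Multiset.card_eq_zero.mp hn ▸ hmem)
  | succ n ih =>
    obtain ⟨r, hr⟩ : ∃ r, r ∈ Q.roots.filter (x < ·) :=
      Multiset.card_pos_iff_exists_mem.mp (by rw [hn]; exact n.succ_pos)
    obtain ⟨hroot, hxr⟩ := Multiset.mem_filter.mp hr
    obtain ⟨R, rfl⟩ := dvd_iff_isRoot.mpr (isRoot_of_mem_roots hroot)
    have hR : R ≠ 0 := right_ne_zero_of_mul (leadingCoeff_ne_zero.mp hlc.ne')
    rw [leadingCoeff_mul, leadingCoeff_X_sub_C, one_mul] at hlc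
    rw [eval_mul, eval_sub, eval_X, eval_C] at hx ⊢
    rw [roots_filter_gt_X_sub_C_mul hxr hR, Multiset.card_cons, add_left_inj] at hn
    have hRx := ih hlc (right_ne_zero_of_mul hx) hn
    calc (0 : ℝ) < (r - x) * ((-1) ^ n * R.eval x) := mul_pos (by linarith) hRx
      _ = (-1) ^ (n + 1) * ((x - r) * R.eval x) := by ring

end Polynomial

theorem iterated_deriv_sign_eq_neg_one_pow_roots_above_general
    (P : Polynomial ℝ) (hlc : 0 < P.leadingCoeff)
    (u₀ : ℝ)
    (j : ℕ) (hj : j = Polynomial.rootMultiplicity u₀ P)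
    (N : ℕ) (hN : N = (P.roots.filter (fun r => u₀ < r)).card) :
    (Even N → 0 < (Polynomial.derivative^[j] P).eval u₀) ∧
    (Odd N → (Polynomial.derivative^[j] P).eval u₀ < 0) := by
  subst hj hN
  set m := P.rootMultiplicity u₀
  set Q := P /ₘ (X - C u₀) ^ m
  have hfactor : (X - C u₀) ^ m * Q = P := pow_mul_divByMonic_rootMultiplicity_eq P u₀
  have hP : P ≠ 0 := leadingCoeff_ne_zero.mp hlc.ne'
  have hQu₀ : Q.eval u₀ ≠ 0 := eval_divByMonic_pow_rootMultiplicity_ne_zero u₀ hP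
  have hQ : Q ≠ 0 := fun h => hQu₀ (by rw [h, eval_zero])
  have hlcQ : 0 < Q.leadingCoeff := by
    rwa [← hfactor, leadingCoeff_mul, leadingCoeff_pow, leadingCoeff_X_sub_C, one_pow,
      one_mul] at hlc
  have hsign := neg_one_pow_card_roots_gt_mul_eval_pos hlcQ hQu₀
  rw [← roots_filter_gt_X_sub_C_pow_mul m hQ, hfactor] at hsign
  have hfact : (0 : ℝ) < m.factorial := mod_cast m.factorial_pos
  rw [eval_iterate_derivative_rootMultiplicity, nsmul_eq_mul]
  refine ⟨fun hN => ?_, fun hN => ?_⟩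
  · rw [hN.neg_one_pow, one_mul] at hsign
    exact mul_pos hfact hsign
  · rw [hN.neg_one_pow, neg_one_mul, neg_pos] at hsign
    exact mul_neg_of_pos_of_neg hfact hsign

/-- Let `P` be a nonzero real polynomial with positive leading coefficient and
`u₀` a root of `P` of multiplicity `j`. Let `N` be the sum of multiplicities of all real
roots of `P` strictly greater than `u₀` (the cardinality, with multiplicity, of the multiset
of such roots). Then the sign of `P^{(j)}(u₀)` equals `(-1)^N`: it is positive if `N` is
even and negative if `N` is odd. -/
theorem iterated_deriv_sign_eq_neg_one_pow_roots_above
    (P : Polynomial ℝ) (hP : P ≠ 0) (hlc : 0 < P.leadingCoeff)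
    (u₀ : ℝ) (hroot : P.eval u₀ = 0)
    (j : ℕ) (hj : j = Polynomial.rootMultiplicity u₀ P)
    (N : ℕ) (hN : N = (P.roots.filter (fun r => u₀ < r)).card) :
    (Even N → 0 < (Polynomial.derivative^[j] P).eval u₀) ∧
    (Odd N → (Polynomial.derivative^[j] P).eval u₀ < 0) :=
  iterated_deriv_sign_eq_neg_one_pow_roots_above_general P hlc u₀ j hj N hN
end

section
/- Let P be a nonzero polynomial with real coefficients of even degree d ≥ 2 and positive leading coefficient, and let Z = {u ∈ ℝ : P(u) ≤ 0}. (1) If a singleton {u₀} is a connected component of Z, then u₀ is a root of P of even multiplicity. (2) If a closed interval [a, b] with a < b is a connected component of Z, then a and b are roots of P of odd multiplicity, and every root of P lying in the open interval (a, b) has even multiplicity. -/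
/-!
Near a root `u` of multiplicity `m` we have `P x = (x - u) ^ m * Q x` with `Q u ≠ 0`, so for
`x < u < y` close to `u` the product `P x * P y` has the sign of `(-1) ^ m`: `P` changes sign at
`u` exactly when `m` is odd. A connected component of `{P ≤ 0}` cannot be prolonged, so next to
an isolated point `P` takes positive values on both sides; at an end of an interval component
`P` is `≤ 0` inside and takes positive values outside; at an interior root `P ≤ 0` on both sides.
-/

open Filter Topology Set Polynomial

section ConnectedComponent

variable {α : Type*} [ConditionallyCompleteLinearOrder α] [TopologicalSpace α] [OrderTopology α]
  [DenselyOrdered α] {Z : Set α} {x u : α}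

theorem frequently_nhdsGT_notMem_of_connectedComponentIn_subset_Iic [NoMaxOrder α]
    (hu : u ∈ connectedComponentIn Z x) (hsub : connectedComponentIn Z x ⊆ Iic u) :
    ∃ᶠ y in 𝓝[>] u, y ∉ Z := by
  intro hZ
  simp only [not_not] at hZ
  obtain ⟨v, huv, hv⟩ := mem_nhdsGT_iff_exists_Ioo_subset.1 hZ
  obtain ⟨w, huw, hwv⟩ := exists_between huv
  have hIco : Ico u v ⊆ connectedComponentIn Z x := by
    rw [connectedComponentIn_eq hu]
    refine isPreconnected_Ico.subset_connectedComponentIn (left_mem_Ico.2 huv) ?_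
    rw [← Ioo_insert_left huv]
    exact insert_subset (connectedComponentIn_subset _ _ hu) hv
  exact (hsub (hIco ⟨huw.le, hwv⟩)).not_gt huw

theorem frequently_nhdsLT_notMem_of_connectedComponentIn_subset_Ici [NoMinOrder α]
    (hu : u ∈ connectedComponentIn Z x) (hsub : connectedComponentIn Z x ⊆ Ici u) :
    ∃ᶠ y in 𝓝[<] u, y ∉ Z := by
  intro hZ
  simp only [not_not] at hZ
  obtain ⟨v, hvu, hv⟩ := mem_nhdsLT_iff_exists_Ioo_subset.1 hZ
  obtain ⟨w, hvw, hwu⟩ := exists_between hvu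
  have hIoc : Ioc v u ⊆ connectedComponentIn Z x := by
    rw [connectedComponentIn_eq hu]
    refine isPreconnected_Ioc.subset_connectedComponentIn (right_mem_Ioc.2 hvu) ?_
    rw [← Ioo_insert_right hvu]
    exact insert_subset (connectedComponentIn_subset _ _ hu) hv
  exact (hsub (hIoc ⟨hvw, hwu.le⟩)).not_gt hwu

end ConnectedComponent

namespace Polynomial

variable {P : ℝ[X]}

theorem eventually_neg_one_pow_rootMultiplicity_mul_eval_mul_eval_pos (hP : P ≠ 0) (u : ℝ) :
    ∀ᶠ p in 𝓝[<] u ×ˢ 𝓝[>] u,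
      0 < (-1) ^ P.rootMultiplicity u * (P.eval p.1 * P.eval p.2) := by
  set m := P.rootMultiplicity u
  set Q := P /ₘ (X - C u) ^ m
  have hfactor (x : ℝ) : P.eval x = (x - u) ^ m * Q.eval x := by
    conv_lhs => rw [← pow_mul_divByMonic_rootMultiplicity_eq P u]
    simp [Q, m]
  have hcont : Continuous fun p : ℝ × ℝ => Q.eval p.1 * Q.eval p.2 := by fun_prop
  have hQ : ∀ᶠ p in 𝓝 (u, u), 0 < Q.eval p.1 * Q.eval p.2 :=
    hcont.continuousAt.eventually
      (lt_mem_nhds (mul_self_pos.2 (eval_divByMonic_pow_rootMultiplicity_ne_zero u hP)))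
  rw [nhds_prod_eq] at hQ
  filter_upwards [hQ.filter_mono (prod_mono nhdsWithin_le_nhds nhdsWithin_le_nhds),
    prod_mem_prod self_mem_nhdsWithin self_mem_nhdsWithin] with ⟨x, y⟩ hQxy ⟨hx, hy⟩
  have hsign : (-1) ^ m * (P.eval x * P.eval y) =
      ((u - x) * (y - u)) ^ m * (Q.eval x * Q.eval y) := by
    rw [hfactor, hfactor, mul_pow, ← neg_sub x u, neg_pow (x - u)]; ring
  rw [hsign]
  exact mul_pos (pow_pos (mul_pos (sub_pos.2 hx) (sub_pos.2 hy)) m) hQxy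

theorem even_rootMultiplicity_of_frequently_mul_eval_nonneg (hP : P ≠ 0) {u : ℝ}
    (h : ∃ᶠ p in 𝓝[<] u ×ˢ 𝓝[>] u, 0 ≤ P.eval p.1 * P.eval p.2) :
    Even (P.rootMultiplicity u) := by
  obtain ⟨p, hp, hpos⟩ :=
    (h.and_eventually (eventually_neg_one_pow_rootMultiplicity_mul_eval_mul_eval_pos hP u)).exists
  refine (Nat.even_or_odd _).resolve_right fun hodd => ?_
  rw [hodd.neg_one_pow] at hpos
  linarith

theorem odd_rootMultiplicity_of_frequently_mul_eval_nonpos (hP : P ≠ 0) {u : ℝ}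
    (h : ∃ᶠ p in 𝓝[<] u ×ˢ 𝓝[>] u, P.eval p.1 * P.eval p.2 ≤ 0) :
    Odd (P.rootMultiplicity u) := by
  obtain ⟨p, hp, hpos⟩ :=
    (h.and_eventually (eventually_neg_one_pow_rootMultiplicity_mul_eval_mul_eval_pos hP u)).exists
  refine (Nat.even_or_odd _).resolve_left fun heven => ?_
  rw [heven.neg_one_pow] at hpos
  linarith

theorem eval_eq_zero_and_even_rootMultiplicity_of_connectedComponentIn_eq_singleton
    (hP : P ≠ 0) {u : ℝ} (hcomp : connectedComponentIn {x | P.eval x ≤ 0} u = {u}) :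
    P.eval u = 0 ∧ Even (P.rootMultiplicity u) := by
  have hmem : u ∈ connectedComponentIn {x | P.eval x ≤ 0} u := hcomp ▸ mem_singleton u
  have hleft : ∃ᶠ x in 𝓝[<] u, 0 < P.eval x := by
    simpa using frequently_nhdsLT_notMem_of_connectedComponentIn_subset_Ici hmem (by simp [hcomp])
  have hright : ∃ᶠ x in 𝓝[>] u, 0 < P.eval x := by
    simpa using frequently_nhdsGT_notMem_of_connectedComponentIn_subset_Iic hmem (by simp [hcomp])
  have hnonneg : 0 ≤ P.eval u :=
    isClosed_Ici.mem_of_frequently_of_tendsto (hright.mono fun _ h => h.le)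
      (P.continuous.tendsto u |>.mono_left nhdsWithin_le_nhds)
  have hnonpos : P.eval u ≤ 0 := connectedComponentIn_subset {x | P.eval x ≤ 0} u hmem
  exact ⟨le_antisymm hnonpos hnonneg,
    even_rootMultiplicity_of_frequently_mul_eval_nonneg hP
      ((frequently_prod_and.2 ⟨hleft, hright⟩).mono fun p hp => (mul_pos hp.1 hp.2).le)⟩

theorem odd_rootMultiplicity_of_connectedComponentIn_eq_Icc (hP : P ≠ 0) {a b : ℝ} (hab : a < b)
    (hcomp : connectedComponentIn {x | P.eval x ≤ 0} a = Icc a b) :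
    Odd (P.rootMultiplicity a) ∧ Odd (P.rootMultiplicity b) := by
  have hIcc : Icc a b ⊆ {x | P.eval x ≤ 0} := hcomp ▸ connectedComponentIn_subset _ _
  have ha : a ∈ connectedComponentIn {x | P.eval x ≤ 0} a := hcomp ▸ left_mem_Icc.2 hab.le
  have hb : b ∈ connectedComponentIn {x | P.eval x ≤ 0} a := hcomp ▸ right_mem_Icc.2 hab.le
  have hleft : ∃ᶠ x in 𝓝[<] a, 0 < P.eval x := by
    simpa using frequently_nhdsLT_notMem_of_connectedComponentIn_subset_Ici ha
      (hcomp ▸ Icc_subset_Ici_self)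
  have hright : ∃ᶠ x in 𝓝[>] b, 0 < P.eval x := by
    simpa using frequently_nhdsGT_notMem_of_connectedComponentIn_subset_Iic hb
      (hcomp ▸ Icc_subset_Iic_self)
  have hinner_a : ∃ᶠ x in 𝓝[>] a, P.eval x ≤ 0 :=
    Eventually.frequently (mem_of_superset (Icc_mem_nhdsGT_of_mem ⟨le_rfl, hab⟩) hIcc)
  have hinner_b : ∃ᶠ x in 𝓝[<] b, P.eval x ≤ 0 :=
    Eventually.frequently (mem_of_superset (Icc_mem_nhdsLT_of_mem ⟨hab, le_rfl⟩) hIcc)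
  exact ⟨odd_rootMultiplicity_of_frequently_mul_eval_nonpos hP
      ((frequently_prod_and.2 ⟨hleft, hinner_a⟩).mono
        fun p hp => mul_nonpos_of_nonneg_of_nonpos hp.1.le hp.2),
    odd_rootMultiplicity_of_frequently_mul_eval_nonpos hP
      ((frequently_prod_and.2 ⟨hinner_b, hright⟩).mono
        fun p hp => mul_nonpos_of_nonpos_of_nonneg hp.1 hp.2.le)⟩

theorem even_rootMultiplicity_of_Icc_subset {a b u : ℝ} (hP : P ≠ 0)
    (hIcc : Icc a b ⊆ {x | P.eval x ≤ 0}) (hu : u ∈ Ioo a b) : Even (P.rootMultiplicity u) := by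
  have hleft : ∃ᶠ x in 𝓝[<] u, P.eval x ≤ 0 :=
    Eventually.frequently (mem_of_superset (Icc_mem_nhdsLT_of_mem ⟨hu.1, hu.2.le⟩) hIcc)
  have hright : ∃ᶠ x in 𝓝[>] u, P.eval x ≤ 0 :=
    Eventually.frequently (mem_of_superset (Icc_mem_nhdsGT_of_mem ⟨hu.1.le, hu.2⟩) hIcc)
  exact even_rootMultiplicity_of_frequently_mul_eval_nonneg hP
    ((frequently_prod_and.2 ⟨hleft, hright⟩).mono
      fun p hp => mul_nonneg_of_nonpos_of_nonpos hp.1 hp.2)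

end Polynomial

theorem atoms_and_strings_multiplicities_general
    (P : Polynomial ℝ) (hP : P ≠ 0)
    (Z : Set ℝ) (hZ : Z = {u : ℝ | P.eval u ≤ 0}) :
    (∀ u₀ : ℝ, u₀ ∈ Z → connectedComponentIn Z u₀ = {u₀} →
        P.eval u₀ = 0 ∧ Even (Polynomial.rootMultiplicity u₀ P)) ∧
    (∀ a b : ℝ, a < b → a ∈ Z → connectedComponentIn Z a = Set.Icc a b →
        (P.eval a = 0 ∧ Odd (Polynomial.rootMultiplicity a P)) ∧
        (P.eval b = 0 ∧ Odd (Polynomial.rootMultiplicity b P)) ∧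
        (∀ u ∈ Set.Ioo a b, P.eval u = 0 → Even (Polynomial.rootMultiplicity u P))) := by
  subst hZ
  refine ⟨fun u₀ _ hcomp =>
    eval_eq_zero_and_even_rootMultiplicity_of_connectedComponentIn_eq_singleton hP hcomp,
    fun a b hab _ hcomp => ?_⟩
  obtain ⟨hodd_a, hodd_b⟩ := odd_rootMultiplicity_of_connectedComponentIn_eq_Icc hP hab hcomp
  exact ⟨⟨(rootMultiplicity_pos hP).1 hodd_a.pos, hodd_a⟩,
    ⟨(rootMultiplicity_pos hP).1 hodd_b.pos, hodd_b⟩,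
    fun u hu _ =>
      even_rootMultiplicity_of_Icc_subset hP (hcomp ▸ connectedComponentIn_subset _ _) hu⟩

/-- Let `P` be a nonzero real polynomial of even degree `d ≥ 2` with positive
leading coefficient and `Z = {u : P(u) ≤ 0}`.
(1) If a singleton `{u₀}` is a connected component of `Z`, then `u₀` is a root of `P` of
even multiplicity.
(2) If `[a, b]` with `a < b` is a connected component of `Z`, then `a` and `b` are roots of
`P` of odd multiplicity, and every root of `P` in the open interval `(a, b)` has even
multiplicity. -/
theorem atoms_and_strings_multiplicities
    (P : Polynomial ℝ) (hP : P ≠ 0) (hdeg : Even P.natDegree)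
    (hd2 : 2 ≤ P.natDegree) (hlc : 0 < P.leadingCoeff)
    (Z : Set ℝ) (hZ : Z = {u : ℝ | P.eval u ≤ 0}) :
    (∀ u₀ : ℝ, u₀ ∈ Z → connectedComponentIn Z u₀ = {u₀} →
        P.eval u₀ = 0 ∧ Even (Polynomial.rootMultiplicity u₀ P)) ∧
    (∀ a b : ℝ, a < b → a ∈ Z → connectedComponentIn Z a = Set.Icc a b →
        (P.eval a = 0 ∧ Odd (Polynomial.rootMultiplicity a P)) ∧
        (P.eval b = 0 ∧ Odd (Polynomial.rootMultiplicity b P)) ∧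
        (∀ u ∈ Set.Ioo a b, P.eval u = 0 → Even (Polynomial.rootMultiplicity u P))) :=
  atoms_and_strings_multiplicities_general P hP Z hZ
end

section
/- Let P be a nonzero polynomial with real coefficients of degree d, and let u₀ ∈ ℝ be a root of P of multiplicity j. Then there exist δ > 0 and ε > 0 such that every polynomial Q with real coefficients satisfying deg Q ≤ d and |coefficient of Q at Xᵏ − coefficient of P at Xᵏ| < ε for all 0 ≤ k ≤ d has at most j real roots, counted with multiplicity, in the interval [u₀ − δ, u₀ + δ]. -/
/-!
By Rolle's theorem, on an interval the number of roots of a real polynomial, counted with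
multiplicity, exceeds that of its derivative by at most one; hence a polynomial whose `j`-th
derivative has no zero on an interval has at most `j` roots there. If `j` is the multiplicity of
`u₀` as a root of `P`, then `P⁽ʲ⁾(u₀) ≠ 0`, so `|P⁽ʲ⁾| > c > 0` on some `[u₀ - δ, u₀ + δ]`. On this
compact interval `Q ↦ Q⁽ʲ⁾(x)` is a linear functional, bounded uniformly in `x` on polynomials of
degree at most `d`; so `Q⁽ʲ⁾` stays within `c` of `P⁽ʲ⁾`, and thus nonzero, once the coefficients
of `Q` are close enough to those of `P`.
-/

open Polynomial Set

namespace Polynomial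

section Rolle

variable {s : Set ℝ} [DecidablePred (· ∈ s)]

theorem card_roots_toFinset_filter_le_derivative_sdiff_succ (hs : s.OrdConnected) (p : ℝ[X]) :
    (p.roots.filter (· ∈ s)).toFinset.card ≤
      (((derivative p).roots.filter (· ∈ s)).toFinset \
        (p.roots.filter (· ∈ s)).toFinset).card + 1 := by
  rcases eq_or_ne (derivative p) 0 with hp' | hp'
  · rw [eq_C_of_derivative_eq_zero hp']
    simp
  have hp : p ≠ 0 := ne_of_apply_ne derivative (by rwa [derivative_zero])
  refine Finset.card_le_sdiff_of_interleaved fun x hx y hy hxy _ => ?_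
  simp only [Multiset.mem_toFinset, Multiset.mem_filter, mem_roots hp] at hx hy
  obtain ⟨z, hz, hz'⟩ := exists_deriv_eq_zero hxy p.continuousOn (hx.1.trans hy.1.symm)
  refine ⟨z, ?_, hz⟩
  rw [Multiset.mem_toFinset, Multiset.mem_filter, mem_roots hp', IsRoot, ← p.deriv]
  exact ⟨hz', hs.out hx.2 hy.2 (Ioo_subset_Icc_self hz)⟩

theorem card_roots_filter_le_derivative (hs : s.OrdConnected) (p : ℝ[X]) :
    Multiset.card (p.roots.filter (· ∈ s)) ≤
      Multiset.card ((derivative p).roots.filter (· ∈ s)) + 1 := by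
  set m := p.roots.filter (· ∈ s)
  set m' := (derivative p).roots.filter (· ∈ s)
  have hcount : ∀ x ∈ m.toFinset, m.count x ≤ m'.count x + 1 := by
    intro x hx
    have hxs : x ∈ s := (Multiset.mem_filter.1 (Multiset.mem_toFinset.1 hx)).2
    simp only [m, m', Multiset.count_filter_of_pos hxs, count_roots]
    have := rootMultiplicity_sub_one_le_derivative_rootMultiplicity p x
    omega
  calc Multiset.card m = ∑ x ∈ m.toFinset, m.count x := (Multiset.toFinset_sum_count_eq m).symm
    _ ≤ ∑ x ∈ m.toFinset, (m'.count x + 1) := Finset.sum_le_sum hcount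
    _ = ∑ x ∈ m.toFinset, m'.count x + m.toFinset.card := by
      rw [Finset.sum_add_distrib, Finset.card_eq_sum_ones]
    _ ≤ ∑ x ∈ m.toFinset, m'.count x + ((m'.toFinset \ m.toFinset).card + 1) := by
      gcongr
      exact card_roots_toFinset_filter_le_derivative_sdiff_succ hs p
    _ ≤ ∑ x ∈ m.toFinset, m'.count x + (∑ x ∈ m'.toFinset \ m.toFinset, m'.count x + 1) := by
      rw [Finset.card_eq_sum_ones]
      gcongr with x hx
      exact Multiset.count_pos.2 (Multiset.mem_toFinset.1 (Finset.mem_sdiff.1 hx).1)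
    _ = ∑ x ∈ m.toFinset ∪ m'.toFinset, m'.count x + 1 := by
      rw [← add_assoc, ← Finset.sum_union Finset.disjoint_sdiff, Finset.union_sdiff_self_eq_union]
    _ = Multiset.card m' + 1 := by
      rw [Multiset.sum_count_eq_card fun a ha =>
        Finset.mem_union_right _ (Multiset.mem_toFinset.2 ha)]

theorem card_roots_filter_le_iterate_derivative (hs : s.OrdConnected) (p : ℝ[X]) (n : ℕ) :
    Multiset.card (p.roots.filter (· ∈ s)) ≤
      Multiset.card ((derivative^[n] p).roots.filter (· ∈ s)) + n := by
  induction n with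
  | zero => simp
  | succ n ih =>
    rw [Function.iterate_succ_apply']
    have := card_roots_filter_le_derivative hs (derivative^[n] p)
    omega

theorem card_roots_filter_le_of_eval_iterate_derivative_ne_zero (hs : s.OrdConnected) (p : ℝ[X])
    (n : ℕ) (h : ∀ x ∈ s, (derivative^[n] p).eval x ≠ 0) :
    Multiset.card (p.roots.filter (· ∈ s)) ≤ n := by
  have hnil : (derivative^[n] p).roots.filter (· ∈ s) = 0 :=
    Multiset.filter_eq_nil.2 fun x hx hxs => h x hxs (mem_roots'.1 hx).2
  simpa [hnil] using card_roots_filter_le_iterate_derivative hs p n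

end Rolle

theorem eval_iterate_derivative_rootMultiplicity_ne_zero {R : Type*} [CommRing R] [IsDomain R]
    [CharZero R] {p : R[X]} (hp : p ≠ 0) (t : R) :
    (derivative^[p.rootMultiplicity t] p).eval t ≠ 0 := by
  rw [eval_iterate_derivative_rootMultiplicity, nsmul_eq_mul]
  exact mul_ne_zero (Nat.cast_ne_zero.2 (Nat.factorial_ne_zero _))
    (eval_divByMonic_pow_rootMultiplicity_ne_zero t hp)

theorem abs_le_sum_abs_of_abs_coeff_le (L : ℝ[X] →ₗ[ℝ] ℝ) {p : ℝ[X]} {d : ℕ}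
    (hp : p.natDegree ≤ d) {η : ℝ} (hη : ∀ k ≤ d, |p.coeff k| ≤ η) :
    |L p| ≤ η * ∑ i ∈ Finset.range (d + 1), |L (X ^ i)| := by
  rw [p.as_sum_range_C_mul_X_pow' (Nat.lt_succ_of_le hp), Finset.mul_sum]
  simp only [map_sum, C_mul', map_smul, smul_eq_mul]
  refine (Finset.abs_sum_le_sum_abs _ _).trans (Finset.sum_le_sum fun i hi => ?_)
  rw [abs_mul]
  exact mul_le_mul_of_nonneg_right (hη i (Nat.lt_succ_iff.1 (Finset.mem_range.1 hi)))
    (abs_nonneg _)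

theorem exists_pos_bound_abs_eval_iterate_derivative {s : Set ℝ} (hs : IsCompact s) (d j : ℕ) :
    ∃ M > 0, ∀ p : ℝ[X], p.natDegree ≤ d → ∀ η, (∀ k ≤ d, |p.coeff k| ≤ η) →
      ∀ x ∈ s, |(derivative^[j] p).eval x| ≤ η * M := by
  let L : ℝ → ℝ[X] →ₗ[ℝ] ℝ := fun x => (leval x).comp (derivative ^ j)
  have hL : ∀ x p, L x p = (derivative^[j] p).eval x := fun x p => by
    simp [L, Module.End.pow_apply]
  obtain ⟨M, hM⟩ := hs.exists_bound_of_continuousOn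
    (f := fun x => ∑ i ∈ Finset.range (d + 1), |L x (X ^ i)|) (by simp only [hL]; fun_prop)
  refine ⟨|M| + 1, by positivity, fun p hp η hη x hx => ?_⟩
  have hη0 : 0 ≤ η := (abs_nonneg _).trans (hη 0 d.zero_le)
  rw [← hL]
  refine (abs_le_sum_abs_of_abs_coeff_le (L x) hp hη).trans (mul_le_mul_of_nonneg_left ?_ hη0)
  linarith [Real.le_norm_self (∑ i ∈ Finset.range (d + 1), |L x (X ^ i)|), hM x hx, le_abs_self M]

end Polynomial

theorem local_root_count_upper_bound_general
    (P : Polynomial ℝ) (hP : P ≠ 0) (d : ℕ) (hd : d = P.natDegree)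
    (u₀ : ℝ)
    (j : ℕ) (hj : j = Polynomial.rootMultiplicity u₀ P) :
    ∃ δ > 0, ∃ ε > 0, ∀ Q : Polynomial ℝ, Q.natDegree ≤ d →
      (∀ k : ℕ, k ≤ d → |Q.coeff k - P.coeff k| < ε) →
      (Q.roots.filter (fun r => u₀ - δ ≤ r ∧ r ≤ u₀ + δ)).card ≤ j := by
  have hPj : 0 < |(derivative^[j] P).eval u₀| := by
    rw [hj]
    exact abs_pos.2 (eval_iterate_derivative_rootMultiplicity_ne_zero hP u₀)
  set Pj := derivative^[j] P
  set c := |Pj.eval u₀| / 2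
  obtain ⟨δ, hδ, hPc⟩ : ∃ δ > 0, ∀ x ∈ Icc (u₀ - δ) (u₀ + δ), c < |Pj.eval x| :=
    (nhds_basis_Icc_pos u₀).eventually_iff.1 <|
      Pj.continuous.abs.continuousAt.eventually (lt_mem_nhds (half_lt_self hPj))
  obtain ⟨M, hM, hbound⟩ :=
    exists_pos_bound_abs_eval_iterate_derivative (s := Icc (u₀ - δ) (u₀ + δ)) isCompact_Icc d j
  refine ⟨δ, hδ, c / M, by positivity, fun Q hQ hQP => ?_⟩
  refine card_roots_filter_le_of_eval_iterate_derivative_ne_zero ordConnected_Icc Q j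
    fun x hx hQx => ?_
  have hdiff := hbound (Q - P) ((natDegree_sub_le Q P).trans (max_le hQ hd.ge)) (c / M)
    (fun k hk => by rw [coeff_sub]; exact (hQP k hk).le) x hx
  rw [iterate_derivative_sub, eval_sub, hQx, zero_sub, abs_neg, div_mul_cancel₀ _ hM.ne'] at hdiff
  exact (hPc x hx).not_ge hdiff

/-- Let `P` be a nonzero real polynomial of degree `d` and `u₀` a root of
multiplicity `j`. Then there are `δ > 0` and `ε > 0` such that every real polynomial `Q`
with `deg Q ≤ d` whose coefficients are `ε`-close to those of `P` has at most `j` real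
roots, counted with multiplicity, in `[u₀ - δ, u₀ + δ]`. -/
theorem local_root_count_upper_bound
    (P : Polynomial ℝ) (hP : P ≠ 0) (d : ℕ) (hd : d = P.natDegree)
    (u₀ : ℝ) (hroot : P.eval u₀ = 0)
    (j : ℕ) (hj : j = Polynomial.rootMultiplicity u₀ P) :
    ∃ δ > 0, ∃ ε > 0, ∀ Q : Polynomial ℝ, Q.natDegree ≤ d →
      (∀ k : ℕ, k ≤ d → |Q.coeff k - P.coeff k| < ε) →
      (Q.roots.filter (fun r => u₀ - δ ≤ r ∧ r ≤ u₀ + δ)).card ≤ j :=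
  local_root_count_upper_bound_general P hP d hd u₀ j hj
end

section
/- Let P be a nonzero polynomial with real coefficients of degree d, and let u₀ ∈ ℝ be a root of P of multiplicity j ≥ 1. Then for every δ > 0 and every ε > 0 there exists a polynomial Q with real coefficients of degree d such that |coefficient of Q at Xᵏ − coefficient of P at Xᵏ| < ε for all 0 ≤ k ≤ d, and Q has at least j distinct real roots in the open interval (u₀ − δ, u₀ + δ), each of multiplicity exactly 1. -/
/-!
Factor `P = R * (X - u₀) ^ j` with `R(u₀) ≠ 0` and replace `(X - u₀) ^ j` by
`∏_{i < j} (X - (u₀ + i η))`. As `η → 0` the coefficients tend to those of `P`, while for small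
`η > 0` the `j` distinct nodes `u₀ + i η` lie in `(u₀ - δ, u₀ + δ)` and avoid the roots of `R`,
so each of them is a simple root.
-/

open Polynomial Filter Topology

namespace Polynomial

section TendstoCoeffwise

variable {α R : Type*} [Semiring R] [TopologicalSpace R]

/-- `R[X]` carries no topology in Mathlib, so convergence of polynomials is stated
coefficientwise. -/
def TendstoCoeffwise (p : α → R[X]) (l : Filter α) (p₀ : R[X]) : Prop :=
  ∀ k, Tendsto (fun a => (p a).coeff k) l (𝓝 (p₀.coeff k))

lemma tendstoCoeffwise_const (l : Filter α) (p₀ : R[X]) :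
    TendstoCoeffwise (fun _ => p₀) l p₀ :=
  fun _ => tendsto_const_nhds

lemma TendstoCoeffwise.mul [IsTopologicalSemiring R] {p q : α → R[X]} {l : Filter α}
    {p₀ q₀ : R[X]} (hp : TendstoCoeffwise p l p₀) (hq : TendstoCoeffwise q l q₀) :
    TendstoCoeffwise (fun a => p a * q a) l (p₀ * q₀) := by
  intro k
  simp only [coeff_mul]
  exact tendsto_finsetSum _ fun x _ => (hp x.1).mul (hq x.2)

lemma TendstoCoeffwise.finset_prod {R : Type*} [CommSemiring R] [TopologicalSpace R]
    [IsTopologicalSemiring R] {ι : Type*} {s : Finset ι} {p : ι → α → R[X]} {l : Filter α}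
    {p₀ : ι → R[X]} (hp : ∀ i ∈ s, TendstoCoeffwise (p i) l (p₀ i)) :
    TendstoCoeffwise (fun a => ∏ i ∈ s, p i a) l (∏ i ∈ s, p₀ i) := by
  classical
  induction s using Finset.induction_on with
  | empty => simpa using tendstoCoeffwise_const l (1 : R[X])
  | insert i s hi ih =>
    simp only [Finset.prod_insert hi]
    exact (hp i (s.mem_insert_self i)).mul (ih fun j hj => hp j (Finset.mem_insert_of_mem hj))

lemma tendstoCoeffwise_X_sub_C {R : Type*} [Ring R] [TopologicalSpace R] [IsTopologicalRing R]
    {f : α → R} {l : Filter α} {c : R} (hf : Tendsto f l (𝓝 c)) :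
    TendstoCoeffwise (fun a => X - C (f a)) l (X - C c) := by
  intro k
  rcases k with _ | k
  · simpa using hf.neg
  · simpa [coeff_C] using tendsto_const_nhds

lemma TendstoCoeffwise.eventually_dist_coeff_lt {R : Type*} [Semiring R] [PseudoMetricSpace R]
    {p : α → R[X]} {l : Filter α} {p₀ : R[X]} (hp : TendstoCoeffwise p l p₀) (d : ℕ)
    {ε : ℝ} (hε : 0 < ε) :
    ∀ᶠ a in l, ∀ k ≤ d, dist ((p a).coeff k) (p₀.coeff k) < ε :=
  (eventually_all_finite (Set.finite_Iic d)).2 fun k _ =>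
    (hp k).eventually (Metric.ball_mem_nhds _ hε)

end TendstoCoeffwise

section Domain

variable {K : Type*} [CommRing K] [IsDomain K]

lemma natDegree_mul_prod_X_sub_C {ι : Type*} {R : K[X]} (hR : R ≠ 0) (s : Finset ι) (f : ι → K) :
    (R * ∏ i ∈ s, (X - C (f i))).natDegree = R.natDegree + s.card := by
  rw [natDegree_mul hR (monic_prod_X_sub_C _ _).ne_zero,
    natDegree_prod_of_monic _ _ fun i _ => monic_X_sub_C _]
  simp

lemma rootMultiplicity_mul_prod_X_sub_C_of_mem {R : K[X]} (hR : R ≠ 0) {s : Finset K} {a : K}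
    (ha : a ∈ s) (hRa : ¬ R.IsRoot a) :
    rootMultiplicity a (R * ∏ b ∈ s, (X - C b)) = 1 := by
  classical
  have hprod : ∏ b ∈ s, (X - C b) ≠ 0 := (monic_prod_X_sub_C id s).ne_zero
  rw [rootMultiplicity_mul (mul_ne_zero hR hprod), rootMultiplicity_eq_zero hRa, ← count_roots,
    roots_prod_X_sub_C, zero_add]
  exact Multiset.count_eq_one_of_mem s.nodup ha

lemma rootMultiplicity_mul_prod_X_sub_C_of_injOn {ι : Type*} {R : K[X]} (hR : R ≠ 0)
    {s : Finset ι} {f : ι → K} (hf : Set.InjOn f s) {i : ι} (hi : i ∈ s) (hRi : ¬ R.IsRoot (f i)) :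
    rootMultiplicity (f i) (R * ∏ b ∈ s, (X - C (f b))) = 1 := by
  classical
  rw [← Finset.prod_image (f := fun a => X - C a) hf]
  exact rootMultiplicity_mul_prod_X_sub_C_of_mem hR (Finset.mem_image_of_mem f hi) hRi

end Domain

end Polynomial

theorem local_root_count_realized_by_perturbation_general
    (P : Polynomial ℝ) (hP : P ≠ 0) (d : ℕ) (hd : d = P.natDegree)
    (u₀ : ℝ)
    (j : ℕ) (hj : j = Polynomial.rootMultiplicity u₀ P) :
    ∀ δ > 0, ∀ ε > 0, ∃ Q : Polynomial ℝ,
      Q.natDegree = d ∧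
      (∀ k : ℕ, k ≤ d → |Q.coeff k - P.coeff k| < ε) ∧
      ∃ S : Finset ℝ, j ≤ S.card ∧
        ∀ r ∈ S, r ∈ Set.Ioo (u₀ - δ) (u₀ + δ) ∧ Q.eval r = 0 ∧
          Polynomial.rootMultiplicity r Q = 1 := by
  intro δ hδ ε hε
  obtain ⟨R, hfac, hRu⟩ := exists_eq_pow_rootMultiplicity_mul_and_not_dvd P hP u₀
  rw [← hj, mul_comm, ← Finset.card_range j, ← Finset.prod_const] at hfac
  rw [dvd_iff_isRoot] at hRu
  have hR : R ≠ 0 := left_ne_zero_of_mul (hfac ▸ hP)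
  let node : ℝ → ℕ → ℝ := fun η i => u₀ + i * η
  let Q : ℝ → ℝ[X] := fun η => R * ∏ i ∈ Finset.range j, (X - C (node η i))
  have hnode : ∀ i, Tendsto (fun η => node η i) (𝓝 0) (𝓝 u₀) := fun i => by
    simpa [node] using ((continuous_const.mul continuous_id).const_add u₀).tendsto (0 : ℝ)
  have hQ : TendstoCoeffwise Q (𝓝 0) P := hfac ▸ (tendstoCoeffwise_const _ R).mul
    (TendstoCoeffwise.finset_prod fun i _ => tendstoCoeffwise_X_sub_C (hnode i))
  have hgood : ∀ᶠ x in 𝓝 u₀, x ∈ Set.Ioo (u₀ - δ) (u₀ + δ) ∧ ¬ R.IsRoot x :=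
    Eventually.and (Ioo_mem_nhds (by linarith) (by linarith))
      (R.continuous.continuousAt.eventually_ne hRu)
  have hnear : ∀ᶠ η in 𝓝 0, ∀ i ∈ Finset.range j, node η i ∈ Set.Ioo (u₀ - δ) (u₀ + δ) ∧
      ¬ R.IsRoot (node η i) :=
    (eventually_all_finset _).2 fun i _ => (hnode i).eventually hgood
  obtain ⟨η, hη : 0 < η, hcoeff, hnodes⟩ := (eventually_mem_nhdsWithin.and (nhdsWithin_le_nhds
    ((hQ.eventually_dist_coeff_lt d hε).and hnear))).exists (f := 𝓝[>] 0)
  have hinj : Set.InjOn (node η) (Finset.range j) := fun a _ b _ hab => by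
    simpa [node, hη.ne'] using hab
  refine ⟨Q η, ?_, fun k hk => by simpa [Real.dist_eq] using hcoeff k hk,
    (Finset.range j).image (node η), by rw [Finset.card_image_of_injOn hinj, Finset.card_range],
    Finset.forall_mem_image.2 fun i hi => ?_⟩
  · rw [hd, hfac, natDegree_mul_prod_X_sub_C hR, natDegree_mul_prod_X_sub_C hR]
  · have hsimple := rootMultiplicity_mul_prod_X_sub_C_of_injOn hR hinj hi (hnodes i hi).2
    exact ⟨(hnodes i hi).1, (rootMultiplicity_pos'.1 (hsimple ▸ one_pos)).2, hsimple⟩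

/-- Let `P` be a nonzero real polynomial of degree `d` and `u₀` a root of
multiplicity `j ≥ 1`. For every `δ > 0` and `ε > 0` there is a real polynomial `Q` of
degree `d`, with all coefficients `ε`-close to those of `P`, having at least `j` distinct
real roots in `(u₀ - δ, u₀ + δ)`, each of multiplicity exactly `1`. -/
theorem local_root_count_realized_by_perturbation
    (P : Polynomial ℝ) (hP : P ≠ 0) (d : ℕ) (hd : d = P.natDegree)
    (u₀ : ℝ) (hroot : P.eval u₀ = 0)
    (j : ℕ) (hj : j = Polynomial.rootMultiplicity u₀ P) (hj1 : 1 ≤ j) :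
    ∀ δ > 0, ∀ ε > 0, ∃ Q : Polynomial ℝ,
      Q.natDegree = d ∧
      (∀ k : ℕ, k ≤ d → |Q.coeff k - P.coeff k| < ε) ∧
      ∃ S : Finset ℝ, j ≤ S.card ∧
        ∀ r ∈ S, r ∈ Set.Ioo (u₀ - δ) (u₀ + δ) ∧ Q.eval r = 0 ∧
          Polynomial.rootMultiplicity r Q = 1 :=
  local_root_count_realized_by_perturbation_general P hP d hd u₀ j hj
end
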